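/- The sum of Euler's totient function, ∑_{k=1}^{n} φ(k), is asymptotically equivalent to (3/π²)·n² as n → ∞. -/

import Mathlib

/-!
Since `φ = μ ∗ id`, we have `∑_{k ≤ n} φ k = ∑_{d ≤ n} μ d · T ⌊n / d⌋` with
`T q = q (q + 1) / 2`. After division by `n²` the `d`-th term tends to `μ d / (2 d²)` and is
bounded by `1 / d²`, so by dominated convergence (Tannery's theorem) the quotient tends to
`(∑ μ d / d²) / 2 = 1 / (2 ζ 2) = 3 / π²`.
-/

open Filter Finset ArithmeticFunction
open scoped ArithmeticFunction.Moebius Topology LSeries.notation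

namespace ArithmeticFunction

theorem coe_moebius_mul_coe_id_apply {R : Type*} [Ring R] (n : ℕ) :
    ((μ : ArithmeticFunction R) * (ArithmeticFunction.id : ArithmeticFunction R)) n =
      n.totient := by
  rcases n.eq_zero_or_pos with rfl | hn
  · simp
  rw [mul_apply]
  simp only [intCoe_apply, natCoe_apply, id_apply]
  refine (sum_eq_iff_sum_mul_moebius_eq (f := fun k => (k.totient : R)) (g := fun k => (k : R))).mp
    (fun k _ => ?_) n hn
  rw [← Nat.cast_sum, Nat.sum_totient]

theorem sum_Icc_totient_eq_sum_moebius_mul {R : Type*} [Ring R] (n : ℕ) :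
    ∑ k ∈ Icc 1 n, (k.totient : R) =
      ∑ d ∈ Ioc 0 n, (μ d : R) * ∑ m ∈ Ioc 0 (n / d), (m : R) := by
  simp_rw [show Icc 1 n = Ioc 0 n from Icc_add_one_left_eq_Ioc 0 n,
    ← coe_moebius_mul_coe_id_apply, sum_Ioc_mul_eq_sum_sum, intCoe_apply, natCoe_apply, id_apply]

theorem tsum_moebius_div_sq : ∑' d : ℕ, (μ d : ℝ) / d ^ 2 = 6 / Real.pi ^ 2 := by
  set S := ∑' d : ℕ, (μ d : ℝ) / d ^ 2
  have hL : L ↗μ 2 = S := by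
    rw [LSeries, Complex.ofReal_tsum]
    congr 1 with d
    rcases eq_or_ne d 0 with rfl | hd
    · simp
    · simp [LSeries.term_of_ne_zero hd]
  have h := LSeries_zeta_mul_Lseries_moebius (s := 2) (by norm_num)
  rw [LSeries_zeta_eq_riemannZeta (by norm_num), riemannZeta_two, hL] at h
  have hπ : (Real.pi : ℂ) ≠ 0 := by exact_mod_cast Real.pi_ne_zero
  apply Complex.ofReal_injective
  push_cast
  field_simp at h ⊢
  linear_combination h

end ArithmeticFunction
theorem Nat.sum_Ioc_id_mul_two (q : ℕ) : (∑ m ∈ Ioc 0 q, m) * 2 = q * (q + 1) := by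
  induction q with
  | zero => simp
  | succ q ih => rw [sum_Ioc_succ_top (Nat.zero_le q), add_mul, ih]; ring

theorem Nat.sum_Ioc_id_le_sq (q : ℕ) : ∑ m ∈ Ioc 0 q, m ≤ q ^ 2 := by
  simpa [sq] using sum_le_card_nsmul (Ioc 0 q) id q fun m hm => (mem_Ioc.mp hm).2

theorem tendsto_natCast_div_div_natCast {d : ℕ} (hd : 0 < d) :
    Tendsto (fun n : ℕ => ((n / d : ℕ) : ℝ) / n) atTop (𝓝 (1 / d)) := by
  have hdr : (0 : ℝ) < d := by exact_mod_cast hd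
  have h := (tendsto_nat_floor_div_atTop.comp
    (tendsto_natCast_atTop_atTop.atTop_div_const hdr)).div_const (d : ℝ)
  refine h.congr' ?_
  filter_upwards [eventually_gt_atTop 0] with n hn
  simp [Nat.floor_div_eq_div, div_div, div_mul_cancel₀ _ hdr.ne']

theorem tendsto_sum_Ioc_div_div_sq (d : ℕ) :
    Tendsto (fun n : ℕ => (∑ m ∈ Ioc 0 (n / d), (m : ℝ)) / n ^ 2) atTop
      (𝓝 (1 / d ^ 2 / 2)) := by
  rcases d.eq_zero_or_pos with rfl | hd
  · simp -- both sides vanish, as `n / 0 = 0` in `ℕ` and `1 / 0 = 0` in `ℝ`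
  have h := tendsto_natCast_div_div_natCast hd
  have h' := (h.mul (h.add tendsto_one_div_atTop_nhds_zero_nat)).div_const 2
  rw [add_zero, ← sq, div_pow, one_pow] at h'
  refine h'.congr' ?_
  filter_upwards [eventually_gt_atTop 0] with n hn
  have hsum : ∑ m ∈ Ioc 0 (n / d), (m : ℝ) = (n / d : ℕ) * ((n / d : ℕ) + 1) / 2 := by
    rw [eq_div_iff two_ne_zero, ← Nat.cast_sum]; exact_mod_cast Nat.sum_Ioc_id_mul_two (n / d)
  rw [hsum]
  field_simp

theorem sum_Ioc_div_div_sq_le (n d : ℕ) :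
    (∑ m ∈ Ioc 0 (n / d), (m : ℝ)) / n ^ 2 ≤ 1 / d ^ 2 := by
  rcases eq_or_ne n 0 with rfl | hn
  · simp
  calc (∑ m ∈ Ioc 0 (n / d), (m : ℝ)) / n ^ 2
      ≤ ((n / d : ℕ) : ℝ) ^ 2 / n ^ 2 := by
        rw [← Nat.cast_sum]; gcongr; exact_mod_cast Nat.sum_Ioc_id_le_sq _
    _ ≤ ((n : ℝ) / d) ^ 2 / n ^ 2 := by gcongr; exact Nat.cast_div_le
    _ = 1 / d ^ 2 := by field_simp

theorem tendsto_sum_mul_sum_Ioc_div_sq {a : ℕ → ℝ} {C : ℝ} (ha : ∀ d, |a d| ≤ C) :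
    Tendsto (fun n : ℕ => (∑ d ∈ Ioc 0 n, a d * ∑ m ∈ Ioc 0 (n / d), (m : ℝ)) / n ^ 2)
      atTop (𝓝 ((∑' d : ℕ, a d / d ^ 2) / 2)) := by
  set F : ℕ → ℕ → ℝ := fun n d => a d * ((∑ m ∈ Ioc 0 (n / d), (m : ℝ)) / n ^ 2)
  have hF (n : ℕ) :
      (∑ d ∈ Ioc 0 n, a d * ∑ m ∈ Ioc 0 (n / d), (m : ℝ)) / n ^ 2 = ∑' d, F n d := by
    rw [sum_div, tsum_eq_sum fun d hd => ?_]
    · exact sum_congr rfl fun d _ => mul_div_assoc _ _ _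
    · have : n / d = 0 := Nat.div_eq_zero_iff.mpr <| by
        simp only [mem_Ioc, not_and_or, not_lt, not_le] at hd; omega
      simp [F, this]
  have hlim : ∑' d : ℕ, a d * (1 / d ^ 2 / 2) = (∑' d : ℕ, a d / d ^ 2) / 2 := by
    rw [← tsum_div_const]; congr 1 with d; ring
  rw [← hlim]
  simp_rw [hF]
  refine tendsto_tsum_of_dominated_convergence (bound := fun d : ℕ => C * (1 / d ^ 2))
    ((Real.summable_one_div_nat_pow.mpr one_lt_two).mul_left C)
    (fun d => tendsto_const_nhds.mul (tendsto_sum_Ioc_div_div_sq d)) (.of_forall fun n d => ?_)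
  rw [norm_mul, Real.norm_eq_abs, Real.norm_of_nonneg (by positivity)]
  exact mul_le_mul (ha d) (sum_Ioc_div_div_sq_le n d) (by positivity) ((abs_nonneg _).trans (ha d))

theorem totient_sum_asymptotic :
    Tendsto (fun n : ℕ =>
      ((∑ k ∈ Finset.Icc 1 n, Nat.totient k : ℕ) : ℝ) / (n : ℝ) ^ 2)
      atTop (nhds (3 / Real.pi ^ 2)) := by
  rw [show 3 / Real.pi ^ 2 = 6 / Real.pi ^ 2 / 2 by ring, ← tsum_moebius_div_sq]
  refine (tendsto_sum_mul_sum_Ioc_div_sq (C := 1) fun d => ?_).congr fun n => ?_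
  · exact_mod_cast abs_moebius_le_one
  · push_cast
    rw [sum_Icc_totient_eq_sum_moebius_mul]
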